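/- arXiv:1711.10128 — 7 statements merged into one kernel-verified Lean document; each statement's English description precedes it below -/
import Mathlib

section
/- Let A, B be real symmetric n×n matrices with B positive definite, and let ρ(x) = (xᵀAx)/(xᵀBx). For every x ∈ ℝⁿ with xᵀBx = 1, the Hessian (second derivative) of the function x ↦ ρ(x)/2 at x is the symmetric bilinear form represented by the matrix A − ρ(x)B − 2(Ax − ρ(x)Bx)(Bx)ᵀ − 2(Bx)(Ax − ρ(x)Bx)ᵀ; that is, for all u, w ∈ ℝⁿ the second derivative at x applied to (u, w) equals uᵀ[A − ρ(x)B − 2(Ax − ρ(x)Bx)(Bx)ᵀ − 2(Bx)(Ax − ρ(x)Bx)ᵀ]w. -/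
open Matrix

variable {n : ℕ}

noncomputable def bil (M : Matrix (Fin n) (Fin n) ℝ) :
    (Fin n → ℝ) →L[ℝ] (Fin n → ℝ) →L[ℝ] ℝ :=
  LinearMap.toContinuousLinearMap
    { toFun := fun y => LinearMap.toContinuousLinearMap
        { toFun := fun z => y ⬝ᵥ M *ᵥ z
          map_add' := by intro a b; simp [Matrix.mulVec_add, dotProduct_add]
          map_smul' := by intro c a; simp [Matrix.mulVec_smul] }
      map_add' := by
        intro a b; ext z
        simp [add_dotProduct]
      map_smul' := by
        intro c a; ext z
        simp [smul_dotProduct] }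

@[simp] lemma bil_apply (M : Matrix (Fin n) (Fin n) ℝ) (y z : Fin n → ℝ) :
    bil M y z = y ⬝ᵥ M *ᵥ z := rfl

lemma hasFDerivAt_quad (M : Matrix (Fin n) (Fin n) ℝ) (y : Fin n → ℝ) :
    HasFDerivAt (fun z => bil M z z) (bil M y + (bil M).flip y) y := by
  have h2 : HasFDerivAt (fun z : Fin n → ℝ => (z, z))
      ((ContinuousLinearMap.id ℝ (Fin n → ℝ)).prod (ContinuousLinearMap.id ℝ (Fin n → ℝ))) y :=
    (hasFDerivAt_id y).prodMk (hasFDerivAt_id y)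
  have h := HasFDerivAt.comp (f := fun z : Fin n → ℝ => (z, z))
    (g := fun p : (Fin n → ℝ) × (Fin n → ℝ) => bil M p.1 p.2) y
    ((bil M).isBoundedBilinearMap.hasFDerivAt (y, y)) h2
  exact h.congr_fderiv (by ext a; rfl)

lemma symdot (M : Matrix (Fin n) (Fin n) ℝ) (hM : Mᵀ = M) (a b : Fin n → ℝ) :
    a ⬝ᵥ M *ᵥ b = b ⬝ᵥ M *ᵥ a := by
  rw [Matrix.dotProduct_mulVec]
  nth_rewrite 1 [← hM]
  rw [Matrix.vecMul_transpose, dotProduct_comm]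

lemma dot_vecMulVec (v w z q : Fin n → ℝ) :
    q ⬝ᵥ (vecMulVec v w) *ᵥ z = (q ⬝ᵥ v) * (w ⬝ᵥ z) := by
  simp only [Matrix.mulVec, dotProduct, Matrix.vecMulVec_apply, Finset.mul_sum,
    Finset.sum_mul]
  rw [Finset.sum_comm]
  exact Finset.sum_congr rfl fun i _ => Finset.sum_congr rfl fun j _ => by ring

/-- Hessian of half the Rayleigh quotient at a `B`-unit vector `x`:
for all `u, w`, the second derivative of `y ↦ ρ(y)/2` at `x` applied to `(u, w)` equals
`uᵀ[A − ρ(x)B − 2(Ax − ρ(x)Bx)(Bx)ᵀ − 2(Bx)(Ax − ρ(x)Bx)ᵀ]w`. -/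
theorem rayleigh_half_hessian
    {n : ℕ} (A B : Matrix (Fin n) (Fin n) ℝ)
    (hA : A.IsSymm) (hB : B.PosDef)
    (ρ : (Fin n → ℝ) → ℝ)
    (hρ : ∀ y : Fin n → ℝ, ρ y = (y ⬝ᵥ A.mulVec y) / (y ⬝ᵥ B.mulVec y))
    (x : Fin n → ℝ) (hx : x ⬝ᵥ B.mulVec x = 1) :
    ∀ u w : Fin n → ℝ,
      fderiv ℝ (fun y => fderiv ℝ (fun z => ρ z / 2) y) x u w
        = u ⬝ᵥ (A - ρ x • B
            - (2 : ℝ) • vecMulVec (A.mulVec x - ρ x • B.mulVec x) (B.mulVec x)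
            - (2 : ℝ) • vecMulVec (B.mulVec x) (A.mulVec x - ρ x • B.mulVec x)).mulVec w := by
  intro u w
  have hAs : Aᵀ = A := hA
  have hBs : Bᵀ = B := hB.isHermitian.eq
  have hxB : bil B x x = 1 := hx
  have hgBcont : Continuous fun y : Fin n → ℝ => bil B y y :=
    ((bil B).isBoundedBilinearMap.continuous).comp (continuous_id.prodMk continuous_id)
  have hev : ∀ᶠ y in nhds x, bil B y y ≠ 0 :=
    hgBcont.continuousAt.eventually_ne (by rw [hxB]; norm_num)
  set F : (Fin n → ℝ) → ((Fin n → ℝ) →L[ℝ] ℝ) := fun y =>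
    (2⁻¹ : ℝ) • ((bil B y y)⁻¹ • (bil A y + (bil A).flip y)
      + bil A y y • ((-(bil B y y ^ 2)⁻¹) • (bil B y + (bil B).flip y))) with hF
  have hfder : ∀ y : Fin n → ℝ, bil B y y ≠ 0 →
      fderiv ℝ (fun z => ρ z / 2) y = F y := by
    intro y hy
    have h1 : HasFDerivAt (fun z => (bil B z z)⁻¹)
        ((-(bil B y y ^ 2)⁻¹) • (bil B y + (bil B).flip y)) y :=
      HasDerivAt.comp_hasFDerivAt (f := fun z : Fin n → ℝ => bil B z z) y (hasDerivAt_inv hy) (hasFDerivAt_quad B y)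
    have h2 := h1.mul (hasFDerivAt_quad A y)
    have h3 := h2.const_mul (2⁻¹ : ℝ)
    have heq : (fun z => ρ z / 2)
        = fun z => (2⁻¹ : ℝ) * ((bil B z z)⁻¹ * bil A z z) := by
      funext z
      rw [hρ]
      simp only [bil_apply]
      rw [div_eq_mul_inv, div_eq_mul_inv]
      ring
    rw [heq]
    exact h3.fderiv
  have hEq : (fun y => fderiv ℝ (fun z => ρ z / 2) y) =ᶠ[nhds x] F :=
    hev.mono fun y hy => hfder y hy
  rw [hEq.fderiv_eq]
  -- now compute fderiv F x
  have hne : bil B x x ≠ 0 := by rw [hxB]; norm_num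
  have hinv : HasFDerivAt (fun y => (bil B y y)⁻¹)
      ((-(bil B x x ^ 2)⁻¹) • (bil B x + (bil B).flip x)) x :=
    HasDerivAt.comp_hasFDerivAt (f := fun z : Fin n → ℝ => bil B z z) x (hasDerivAt_inv hne) (hasFDerivAt_quad B x)
  have hlinA : HasFDerivAt (fun y => bil A y + (bil A).flip y)
      ((bil A) + (bil A).flip) x :=
    (bil A).hasFDerivAt.add ((bil A).flip.hasFDerivAt)
  have hlinB : HasFDerivAt (fun y => bil B y + (bil B).flip y)
      ((bil B) + (bil B).flip) x :=
    (bil B).hasFDerivAt.add ((bil B).flip.hasFDerivAt)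
  have t1 := hinv.smul hlinA
  have hsqd : HasDerivAt (fun t : ℝ => -(t ^ 2)⁻¹)
      (-(-(↑2 * bil B x x ^ 1) / (bil B x x ^ 2) ^ 2)) (bil B x x) :=
    ((hasDerivAt_pow 2 (bil B x x)).inv (pow_ne_zero 2 hne)).neg
  have hsq' : HasFDerivAt (fun y : Fin n → ℝ => -(bil B y y ^ 2)⁻¹)
      ((-(-(2 * bil B x x ^ 1) / (bil B x x ^ 2) ^ 2)) • (bil B x + (bil B).flip x)) x :=
    HasDerivAt.comp_hasFDerivAt (f := fun z : Fin n → ℝ => bil B z z) x hsqd (hasFDerivAt_quad B x)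
  have t2 := hsq'.smul hlinB
  have t3 := (hasFDerivAt_quad A x).smul t2
  have t4 := (t1.add t3).const_smul (2⁻¹ : ℝ)
  rw [hF]
  erw [t4.fderiv]
  have hρx : ρ x = x ⬝ᵥ A *ᵥ x := by rw [hρ, hx, div_one]
  simp only [ContinuousLinearMap.add_apply, ContinuousLinearMap.smul_apply,
    ContinuousLinearMap.smulRight_apply, ContinuousLinearMap.flip_apply, bil_apply,
    ContinuousLinearMap.coe_smul', Pi.smul_apply, Pi.smul_apply', smul_eq_mul, hxB, hx, hρx,
    ContinuousLinearMap.coe_add', Pi.add_apply, one_pow, inv_one, neg_neg,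
    Matrix.sub_mulVec, Matrix.smul_mulVec, dotProduct_sub,
    dotProduct_smul, dot_vecMulVec]
  simp only [sub_dotProduct, smul_dotProduct, smul_eq_mul,
    dotProduct_comm (B *ᵥ x) w, dotProduct_comm (A *ᵥ x) w]
  rw [symdot A hAs w u, symdot A hAs x w, symdot B hBs x w, symdot B hBs w u,
    symdot B hBs x u, symdot A hAs x u]
  ring
end

section
/- Let A, B be real symmetric n×n matrices with B positive definite, with B-orthonormal eigenbasis v₁,…,vₙ of the pencil (A,B) (Avᵢ = λᵢBvᵢ, vᵢᵀBvⱼ = δ_{ij}). Let θ ∈ ℝ, f = Σ_{j=2}^{n} sⱼvⱼ with Σ_{j=2}^{n} sⱼ² = 1, and x = v₁cos θ + f sin θ. Then the eigenresidual satisfies Ax − ρ(x)Bx = sin θ · [ Σ_{j=2}^{n} sⱼ(λⱼ − ρ(x))Bvⱼ − sin θ cos θ (ρ(f) − λ₁) Bv₁ ], where ρ denotes the Rayleigh quotient. -/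
open Matrix

lemma mulVec_sum' {n : ℕ} (A : Matrix (Fin n) (Fin n) ℝ) (S : Finset (Fin n))
    (g : Fin n → Fin n → ℝ) :
    A.mulVec (∑ j ∈ S, g j) = ∑ j ∈ S, A.mulVec (g j) := by
  simp only [← Matrix.mulVecLin_apply, map_sum]

lemma sum_dotProduct' {n : ℕ} (w : Fin n → ℝ) (S : Finset (Fin n))
    (g : Fin n → Fin n → ℝ) :
    (∑ j ∈ S, g j) ⬝ᵥ w = ∑ j ∈ S, g j ⬝ᵥ w := by
  simp [dotProduct, Finset.sum_apply, Finset.sum_mul]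
  rw [Finset.sum_comm]

lemma dotProduct_sum' {n : ℕ} (w : Fin n → ℝ) (S : Finset (Fin n))
    (g : Fin n → Fin n → ℝ) :
    w ⬝ᵥ (∑ j ∈ S, g j) = ∑ j ∈ S, w ⬝ᵥ g j := by
  simp [dotProduct, Finset.sum_apply, Finset.mul_sum]
  rw [Finset.sum_comm]

/-- Eigenresidual expansion: with `x = v₁ cos θ + f sin θ`,
`f = Σ_{j≠1} sⱼ vⱼ`, `Σ sⱼ² = 1`, one has
`Ax − ρ(x)Bx = sin θ [ Σ_{j≠1} sⱼ(λⱼ − ρ(x)) Bvⱼ − sin θ cos θ (ρ(f) − λ₁) Bv₁ ]`. -/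
theorem eigenresidual_expansion
    {n : ℕ} (hn : 2 ≤ n)
    (A B : Matrix (Fin n) (Fin n) ℝ)
    (hA : A.IsSymm) (hB : B.PosDef)
    (ρ : (Fin n → ℝ) → ℝ)
    (hρ : ∀ y : Fin n → ℝ, ρ y = (y ⬝ᵥ A.mulVec y) / (y ⬝ᵥ B.mulVec y))
    (lam : Fin n → ℝ) (v : Fin n → Fin n → ℝ)
    (heig : ∀ i, A.mulVec (v i) = lam i • B.mulVec (v i))
    (horth : ∀ i j, v i ⬝ᵥ B.mulVec (v j) = if i = j then 1 else 0)
    (hmono : Monotone lam)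
    (hgap : lam ⟨0, by omega⟩ < lam ⟨1, by omega⟩)
    (s : Fin n → ℝ) (f : Fin n → ℝ)
    (hf : f = ∑ j ∈ Finset.univ.filter (fun j : Fin n => j ≠ ⟨0, by omega⟩), s j • v j)
    (hs : ∑ j ∈ Finset.univ.filter (fun j : Fin n => j ≠ ⟨0, by omega⟩), (s j) ^ 2 = 1)
    (θ : ℝ) (x : Fin n → ℝ)
    (hx : x = Real.cos θ • v ⟨0, by omega⟩ + Real.sin θ • f) :
    A.mulVec x - ρ x • B.mulVec x
      = Real.sin θ •
          ((∑ j ∈ Finset.univ.filter (fun j : Fin n => j ≠ ⟨0, by omega⟩),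
              (s j * (lam j - ρ x)) • B.mulVec (v j))
            - (Real.sin θ * Real.cos θ * (ρ f - lam ⟨0, by omega⟩)) •
                B.mulVec (v ⟨0, by omega⟩)) := by
  set i0 : Fin n := ⟨0, by omega⟩ with hi0def
  set S := Finset.univ.filter (fun j : Fin n => j ≠ i0) with hSdef
  have hmemS : ∀ j : Fin n, j ∈ S ↔ j ≠ i0 := by
    intro j; simp [hSdef]
  -- expansions of A f and B f
  have hBf : B.mulVec f = ∑ j ∈ S, s j • B.mulVec (v j) := by
    rw [hf, mulVec_sum']
    exact Finset.sum_congr rfl fun j _ => Matrix.mulVec_smul B (s j) (v j)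
  have hAf : A.mulVec f = ∑ j ∈ S, (s j * lam j) • B.mulVec (v j) := by
    rw [hf, mulVec_sum']
    refine Finset.sum_congr rfl fun j _ => ?_
    rw [Matrix.mulVec_smul, heig j, smul_smul]
  -- dot products with f
  have hfBv : ∀ j : Fin n, f ⬝ᵥ B.mulVec (v j) = if j ∈ S then s j else 0 := by
    intro j
    rw [hf, sum_dotProduct']
    simp only [smul_dotProduct, horth, smul_eq_mul, mul_ite, mul_one, mul_zero]
    rw [Finset.sum_ite_eq' S j s]
  have hfBv0 : f ⬝ᵥ B.mulVec (v i0) = 0 := by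
    rw [hfBv]; simp [hmemS]
  have hv0Bf : v i0 ⬝ᵥ B.mulVec f = 0 := by
    rw [hBf, dotProduct_sum']
    refine Finset.sum_eq_zero fun j hj => ?_
    have hji : j ≠ i0 := (hmemS j).mp hj
    rw [dotProduct_smul, horth, if_neg (fun h => hji h.symm), smul_zero]
  have hv0Af : v i0 ⬝ᵥ A.mulVec f = 0 := by
    rw [hAf, dotProduct_sum']
    refine Finset.sum_eq_zero fun j hj => ?_
    have hji : j ≠ i0 := (hmemS j).mp hj
    rw [dotProduct_smul, horth, if_neg (fun h => hji h.symm), smul_zero]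
  have hfAv0 : f ⬝ᵥ A.mulVec (v i0) = 0 := by
    rw [heig, dotProduct_smul, hfBv0, smul_zero]
  have hfBf : f ⬝ᵥ B.mulVec f = 1 := by
    rw [hBf, dotProduct_sum']
    have : ∀ j ∈ S, f ⬝ᵥ s j • B.mulVec (v j) = s j ^ 2 := by
      intro j hj
      rw [dotProduct_smul, hfBv, if_pos hj, smul_eq_mul, sq]
    rw [Finset.sum_congr rfl this, hs]
  have hρf : ρ f = f ⬝ᵥ A.mulVec f := by
    rw [hρ, hfBf, div_one]
  have hv0Bv0 : v i0 ⬝ᵥ B.mulVec (v i0) = 1 := by simp [horth]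
  have hv0Av0 : v i0 ⬝ᵥ A.mulVec (v i0) = lam i0 := by
    rw [heig, dotProduct_smul, hv0Bv0, smul_eq_mul, mul_one]
  -- Rayleigh quotient of x
  have hxBx : x ⬝ᵥ B.mulVec x = 1 := by
    rw [hx]
    rw [Matrix.mulVec_add, Matrix.mulVec_smul, Matrix.mulVec_smul]
    rw [add_dotProduct, dotProduct_add, dotProduct_add]
    simp only [smul_dotProduct, dotProduct_smul, hv0Bv0, hv0Bf, hfBv0, hfBf,
      smul_eq_mul, mul_one, mul_zero, add_zero, zero_add]
    nlinarith [Real.sin_sq_add_cos_sq θ]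
  have hxAx : x ⬝ᵥ A.mulVec x = Real.cos θ ^ 2 * lam i0 + Real.sin θ ^ 2 * ρ f := by
    rw [hx]
    rw [Matrix.mulVec_add, Matrix.mulVec_smul, Matrix.mulVec_smul]
    rw [add_dotProduct, dotProduct_add, dotProduct_add]
    simp only [smul_dotProduct, dotProduct_smul, hv0Av0, hv0Af, hfAv0,
      smul_eq_mul, mul_one, mul_zero, add_zero, zero_add]
    rw [hρf]; ring
  have hρx : ρ x = Real.cos θ ^ 2 * lam i0 + Real.sin θ ^ 2 * ρ f := by
    rw [hρ, hxAx, hxBx, div_one]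
  have hkey : Real.cos θ * lam i0 - ρ x * Real.cos θ
      = -(Real.sin θ * (Real.sin θ * Real.cos θ * (ρ f - lam i0))) := by
    rw [hρx]
    linear_combination (-(Real.cos θ * lam i0)) * Real.sin_sq_add_cos_sq θ
  -- expansions of A x and B x
  have hAx : A.mulVec x = (Real.cos θ * lam i0) • B.mulVec (v i0)
      + Real.sin θ • ∑ j ∈ S, (s j * lam j) • B.mulVec (v j) := by
    rw [hx, Matrix.mulVec_add, Matrix.mulVec_smul, Matrix.mulVec_smul, heig, hAf, smul_smul]
  have hBx : B.mulVec x = Real.cos θ • B.mulVec (v i0)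
      + Real.sin θ • ∑ j ∈ S, s j • B.mulVec (v j) := by
    rw [hx, Matrix.mulVec_add, Matrix.mulVec_smul, Matrix.mulVec_smul, hBf]
  have hT : (∑ j ∈ S, (s j * (lam j - ρ x)) • B.mulVec (v j))
      = (∑ j ∈ S, (s j * lam j) • B.mulVec (v j))
        - ρ x • ∑ j ∈ S, s j • B.mulVec (v j) := by
    rw [Finset.smul_sum, ← Finset.sum_sub_distrib]
    refine Finset.sum_congr rfl fun j _ => ?_
    rw [smul_smul, ← sub_smul]
    congr 1; ring
  rw [hAx, hBx, hT]
  match_scalars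
  all_goals try ring
  all_goals linear_combination hkey
end

section
/- Let A, B be real symmetric n×n matrices with B positive definite, and let x, p ∈ ℝⁿ be linearly independent. With a = a(x,p), b = b(x,p), c = c(x,p) as defined by a = (pᵀAp)(pᵀBx) − (pᵀBp)(pᵀAx), b = (pᵀAp)(xᵀBx) − (pᵀBp)(xᵀAx), c = (pᵀAx)(xᵀBx) − (pᵀBx)(xᵀAx), the function α ↦ ρ(x + αp)/2 is differentiable on ℝ and its derivative at every α ∈ ℝ equals (aα² + bα + c) / [(x + αp)ᵀB(x + αp)]². -/
open Matrix

private lemma symm_dot {n : ℕ} (M : Matrix (Fin n) (Fin n) ℝ) (hM : M.IsSymm)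
    (u v : Fin n → ℝ) : u ⬝ᵥ M.mulVec v = v ⬝ᵥ M.mulVec u := by
  have h1 : u ᵥ* M = M *ᵥ u := by
    nth_rewrite 1 [← hM]; exact Matrix.vecMul_transpose M u
  rw [Matrix.dotProduct_mulVec, h1, dotProduct_comm]

private lemma expand_dot {n : ℕ} (M : Matrix (Fin n) (Fin n) ℝ) (hM : M.IsSymm)
    (x p : Fin n → ℝ) (t : ℝ) :
    (x + t • p) ⬝ᵥ M.mulVec (x + t • p)
      = x ⬝ᵥ M.mulVec x + 2 * (p ⬝ᵥ M.mulVec x) * t + (p ⬝ᵥ M.mulVec p) * t ^ 2 := by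
  have h := symm_dot M hM x p
  simp only [Matrix.mulVec_add, Matrix.mulVec_smul, dotProduct_add,
    add_dotProduct, smul_dotProduct, dotProduct_smul, smul_eq_mul]
  rw [h]; ring

/-- The function `α ↦ ρ(x + αp)/2` is differentiable on `ℝ` with
derivative `(aα² + bα + c) / [(x + αp)ᵀB(x + αp)]²` at every `α`. -/
theorem rayleigh_line_derivative
    {n : ℕ} (A B : Matrix (Fin n) (Fin n) ℝ)
    (hA : A.IsSymm) (hB : B.PosDef)
    (x p : Fin n → ℝ) (hxp : LinearIndependent ℝ ![x, p])
    (ρ : (Fin n → ℝ) → ℝ)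
    (hρ : ∀ y : Fin n → ℝ, ρ y = (y ⬝ᵥ A.mulVec y) / (y ⬝ᵥ B.mulVec y))
    (a b c : ℝ)
    (ha : a = (p ⬝ᵥ A.mulVec p) * (p ⬝ᵥ B.mulVec x) - (p ⬝ᵥ B.mulVec p) * (p ⬝ᵥ A.mulVec x))
    (hb : b = (p ⬝ᵥ A.mulVec p) * (x ⬝ᵥ B.mulVec x) - (p ⬝ᵥ B.mulVec p) * (x ⬝ᵥ A.mulVec x))
    (hc : c = (p ⬝ᵥ A.mulVec x) * (x ⬝ᵥ B.mulVec x) - (p ⬝ᵥ B.mulVec x) * (x ⬝ᵥ A.mulVec x)) :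
    ∀ α : ℝ,
      HasDerivAt (fun t : ℝ => ρ (x + t • p) / 2)
        ((a * α ^ 2 + b * α + c) / ((x + α • p) ⬝ᵥ B.mulVec (x + α • p)) ^ 2) α := by
  intro α
  set xAx := x ⬝ᵥ A.mulVec x
  set pAx := p ⬝ᵥ A.mulVec x
  set pAp := p ⬝ᵥ A.mulVec p
  set xBx := x ⬝ᵥ B.mulVec x
  set pBx := p ⬝ᵥ B.mulVec x
  set pBp := p ⬝ᵥ B.mulVec p
  have hBsymm : B.IsSymm := by
    have := hB.1
    rwa [Matrix.IsHermitian, Matrix.conjTranspose_eq_transpose_of_trivial] at this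
  -- nonvanishing of the denominator
  have hne : ∀ t : ℝ, x + t • p ≠ 0 := by
    intro t h
    have h2 := (linearIndependent_fin2.mp hxp).2 (-t)
    simp only [Matrix.cons_val_one, Matrix.head_cons, Matrix.cons_val_zero] at h2
    apply h2
    rw [neg_smul]
    exact (eq_neg_of_add_eq_zero_left h).symm
  have hDpos : ∀ t : ℝ, 0 < (x + t • p) ⬝ᵥ B.mulVec (x + t • p) := fun t =>
    hB.dotProduct_mulVec_pos (hne t)
  have hD : ∀ t : ℝ, (x + t • p) ⬝ᵥ B.mulVec (x + t • p)
      = xBx + 2 * pBx * t + pBp * t ^ 2 := fun t => expand_dot B hBsymm x p t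
  have hN : ∀ t : ℝ, (x + t • p) ⬝ᵥ A.mulVec (x + t • p)
      = xAx + 2 * pAx * t + pAp * t ^ 2 := fun t => expand_dot A hA x p t
  have hDα : xBx + 2 * pBx * α + pBp * α ^ 2 ≠ 0 := by
    rw [← hD]; exact ne_of_gt (hDpos α)
  have hNder : HasDerivAt (fun t : ℝ => xAx + 2 * pAx * t + pAp * t ^ 2)
      (2 * pAx + pAp * (2 * α)) α := by
    have h1 : HasDerivAt (fun t : ℝ => t) 1 α := hasDerivAt_id α
    have h2 : HasDerivAt (fun t : ℝ => t ^ 2) (2 * α) α := by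
      simpa using (hasDerivAt_pow 2 α)
    simpa [mul_comm, Pi.add_def] using
      (((h1.const_mul (2 * pAx)).const_add xAx).add (h2.const_mul pAp))
  have hDder : HasDerivAt (fun t : ℝ => xBx + 2 * pBx * t + pBp * t ^ 2)
      (2 * pBx + pBp * (2 * α)) α := by
    have h1 : HasDerivAt (fun t : ℝ => t) 1 α := hasDerivAt_id α
    have h2 : HasDerivAt (fun t : ℝ => t ^ 2) (2 * α) α := by
      simpa using (hasDerivAt_pow 2 α)
    simpa [mul_comm, Pi.add_def] using
      (((h1.const_mul (2 * pBx)).const_add xBx).add (h2.const_mul pBp))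
  have hdiv := (hNder.div hDder hDα).div_const 2
  have hfun : (fun t : ℝ => ρ (x + t • p) / 2)
      = fun t : ℝ => (xAx + 2 * pAx * t + pAp * t ^ 2)
          / (xBx + 2 * pBx * t + pBp * t ^ 2) / 2 := by
    funext t; rw [hρ, hN t, hD t]
  rw [hfun]
  convert hdiv using 1
  · rfl
  · rfl
  · rfl
  rw [hD α, ha, hb, hc]
  field_simp
  ring
end

section
/- Let A, B be real symmetric n×n matrices with B positive definite, and let x, p ∈ ℝⁿ be linearly independent vectors such that p is a descent direction for ρ at x, i.e., pᵀ(Ax − ρ(x)Bx) < 0, and such that ρ(p) − ρ(x) ≥ δ for some constant δ > 0. With a, b, c as defined by a = (pᵀAp)(pᵀBx) − (pᵀBp)(pᵀAx), b = (pᵀAp)(xᵀBx) − (pᵀBp)(xᵀAx) > 0, c = (pᵀAx)(xᵀBx) − (pᵀBx)(xᵀAx) < 0, the quadratic aα² + bα + c has at least one positive real root; let α* denote its smallest positive root (which equals −c/b when a = 0, and (−b + √(b² − 4ac))/(2a) when a ≠ 0). Then α* is the global minimizer of α ↦ ρ(x + αp) over α ∈ (0, ∞), i.e., ρ(x + α*p)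 ≤ ρ(x + αp) for all α > 0. -/
lemma rq_deriv (App Apx Axx Bpp Bpx Bxx a b c : ℝ)
    (hD : ∀ α : ℝ, 0 < Bxx + 2*Bpx*α + Bpp*α^2)
    (ha : a = App*Bpx - Bpp*Apx) (hb : b = App*Bxx - Bpp*Axx) (hc : c = Apx*Bxx - Bpx*Axx)
    (α : ℝ) :
    HasDerivAt (fun t => (Axx + 2*Apx*t + App*t^2)/(Bxx + 2*Bpx*t + Bpp*t^2))
      (2*(a*α^2+b*α+c)/(Bxx + 2*Bpx*α + Bpp*α^2)^2) α := by
  have hN : HasDerivAt (fun t : ℝ => Axx + 2*Apx*t + App*t^2) (2*Apx + App*(2*α)) α := by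
    have h1 := ((hasDerivAt_id α).const_mul (2*Apx)).const_add Axx
    have h2 := (hasDerivAt_pow 2 α).const_mul App
    have h3 := h1.add h2
    simp at h3
    exact h3
  have hDD : HasDerivAt (fun t : ℝ => Bxx + 2*Bpx*t + Bpp*t^2) (2*Bpx + Bpp*(2*α)) α := by
    have h1 := ((hasDerivAt_id α).const_mul (2*Bpx)).const_add Bxx
    have h2 := (hasDerivAt_pow 2 α).const_mul Bpp
    have h3 := h1.add h2
    simp at h3
    exact h3
  have h := hN.div hDD (ne_of_gt (hD α))
  refine h.congr_deriv ?_
  have hDpos := hD α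
  field_simp
  ring_nf
  subst ha hb hc
  ring

lemma anti_of_deriv {f g : ℝ → ℝ} (hf : ∀ t : ℝ, HasDerivAt f (g t) t)
    {l u : ℝ} (h : ∀ t ∈ Set.Ioo l u, g t ≤ 0) : AntitoneOn f (Set.Icc l u) := by
  apply antitoneOn_of_deriv_nonpos (convex_Icc l u)
  · exact fun t _ => (hf t).continuousAt.continuousWithinAt
  · exact fun t _ => (hf t).differentiableAt.differentiableWithinAt
  · intro t ht
    rw [interior_Icc] at ht
    rw [(hf t).deriv]
    exact h t ht

lemma mono_of_deriv {f g : ℝ → ℝ} (hf : ∀ t : ℝ, HasDerivAt f (g t) t)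
    {l u : ℝ} (h : ∀ t ∈ Set.Ioo l u, 0 ≤ g t) : MonotoneOn f (Set.Icc l u) := by
  apply monotoneOn_of_deriv_nonneg (convex_Icc l u)
  · exact fun t _ => (hf t).continuousAt.continuousWithinAt
  · exact fun t _ => (hf t).differentiableAt.differentiableWithinAt
  · intro t ht
    rw [interior_Icc] at ht
    rw [(hf t).deriv]
    exact h t ht


lemma root_formula {a b c s r : ℝ} (ha : a ≠ 0) (hs : s^2 = b^2-4*a*c) (hr : r = (-b+s)/(2*a)) :
    a*r^2+b*r+c = 0 := by
  subst hr
  field_simp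
  linear_combination hs

lemma sqrt_lt_self {s b ac : ℝ} (hs2 : s^2 = b^2 - 4*ac) (hsnn : 0 ≤ s) (hb : 0 < b)
    (hac : 0 < ac) : s < b := by nlinarith

set_option maxHeartbeats 1000000 in
lemma rq_key (App Apx Axx Bpp Bpx Bxx a b c δ : ℝ)
    (hD : ∀ α : ℝ, 0 < Bxx + 2*Bpx*α + Bpp*α^2)
    (hBpp : 0 < Bpp)
    (ha : a = App*Bpx - Bpp*Apx) (hb : b = App*Bxx - Bpp*Axx) (hc : c = Apx*Bxx - Bpx*Axx)
    (hbpos : 0 < b) (hcneg : c < 0) (hδ : 0 < δ)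
    (hgap : δ ≤ App/Bpp - Axx/Bxx) :
    (∃ α : ℝ, 0 < α ∧ a*α^2+b*α+c = 0) ∧
    ∀ αs : ℝ, 0 < αs → a*αs^2+b*αs+c = 0 →
      (∀ β : ℝ, 0 < β → a*β^2+b*β+c = 0 → αs ≤ β) →
      (a = 0 → αs = -c/b) ∧
      (a ≠ 0 → αs = (-b + Real.sqrt (b^2-4*a*c))/(2*a)) ∧
      ∀ α : ℝ, 0 < α →
        (Axx + 2*Apx*αs + App*αs^2)/(Bxx + 2*Bpx*αs + Bpp*αs^2)
          ≤ (Axx + 2*Apx*α + App*α^2)/(Bxx + 2*Bpx*α + Bpp*α^2) := by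
  have hBxx : 0 < Bxx := by simpa using hD 0
  set f : ℝ → ℝ := fun t => (Axx + 2*Apx*t + App*t^2)/(Bxx + 2*Bpx*t + Bpp*t^2) with hfdef
  have hf' : ∀ α : ℝ, HasDerivAt f (2*(a*α^2+b*α+c)/(Bxx + 2*Bpx*α + Bpp*α^2)^2) α :=
    rq_deriv App Apx Axx Bpp Bpx Bxx a b c hD ha hb hc
  have hanti : ∀ l u : ℝ, (∀ t ∈ Set.Ioo l u, a*t^2+b*t+c ≤ 0) → AntitoneOn f (Set.Icc l u) := by
    intro l u h
    apply anti_of_deriv hf'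
    intro t ht
    have := h t ht
    have hd := hD t
    apply div_nonpos_of_nonpos_of_nonneg (by linarith) (by positivity)
  have hmono : ∀ l u : ℝ, (∀ t ∈ Set.Ioo l u, 0 ≤ a*t^2+b*t+c) → MonotoneOn f (Set.Icc l u) := by
    intro l u h
    apply mono_of_deriv hf'
    intro t ht
    have := h t ht
    have hd := hD t
    positivity
  have hfp : ∀ α : ℝ, f α - App/Bpp = (-b - 2*a*α)/((Bxx + 2*Bpx*α + Bpp*α^2)*Bpp) := by
    intro α
    have hd := hD α
    rw [hfdef]
    field_simp
    have hx : Bxx + 2 * α * Bpx + α ^ 2 * Bpp ≠ 0 := by convert hd.ne' using 1; ring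
    rw [div_sub' hx, div_left_inj' hx]
    subst ha hb
    ring
  have hf0 : f 0 = Axx/Bxx := by simp [hfdef]
  constructor
  · -- existence of a positive root
    rcases lt_trichotomy a 0 with hneg | hzero | hpos
    · -- a < 0 : first show that the discriminant is nonnegative
      have haz : a ≠ 0 := ne_of_lt hneg
      have hdisc : 0 ≤ b^2 - 4*a*c := by
        by_contra hlt
        push_neg at hlt
        have hqneg : ∀ t : ℝ, a*t^2+b*t+c < 0 := by
          intro t
          nlinarith [sq_nonneg (2*a*t+b)]
        have hA := hanti 0 (-b/(2*a)) (fun t _ => le_of_lt (hqneg t))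
        have hv : (0:ℝ) < -b/(2*a) := div_pos_of_neg_of_neg (by linarith) (by linarith)
        have h1 : f (-b/(2*a)) ≤ f 0 :=
          hA (Set.mem_Icc.2 ⟨le_refl 0, le_of_lt hv⟩)
            (Set.mem_Icc.2 ⟨le_of_lt hv, le_refl _⟩) (le_of_lt hv)
        have h2 : f (-b/(2*a)) - App/Bpp = 0 := by
          rw [hfp]
          have hz : -b - 2*a*(-b/(2*a)) = 0 := by field_simp; ring
          rw [hz, zero_div]
        rw [hf0] at h1
        have : App/Bpp ≤ Axx/Bxx := by linarith
        linarith
      set s := Real.sqrt (b^2-4*a*c) with hs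
      have hs2 : s^2 = b^2-4*a*c := Real.sq_sqrt hdisc
      have hsnn : 0 ≤ s := Real.sqrt_nonneg _
      have hac : 0 < a*c := mul_pos_of_neg_of_neg hneg hcneg
      have hslt : s < b := sqrt_lt_self (by linear_combination hs2) hsnn hbpos hac
      exact ⟨(-b+s)/(2*a), div_pos_of_neg_of_neg (by linarith) (by linarith),
        root_formula haz hs2 rfl⟩
    · -- a = 0
      refine ⟨-c/b, div_pos (by linarith) hbpos, ?_⟩
      rw [hzero]
      have hbne : b ≠ 0 := ne_of_gt hbpos
      field_simp
      ring
    · -- a > 0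
      have haz : a ≠ 0 := ne_of_gt hpos
      set s := Real.sqrt (b^2-4*a*c) with hs
      have hdisc : 0 ≤ b^2 - 4*a*c := by nlinarith
      have hs2 : s^2 = b^2-4*a*c := Real.sq_sqrt hdisc
      have hsnn : 0 ≤ s := Real.sqrt_nonneg _
      have hsgt : b < s := by nlinarith
      exact ⟨(-b+s)/(2*a), div_pos (by linarith) (by linarith), root_formula haz hs2 rfl⟩
  · intro αs hαs hroot hmin
    refine ⟨?_, ?_, ?_⟩
    · intro h0
      rw [h0] at hroot
      field_simp
      linarith [hroot]
    · intro hane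
      have hd : b^2-4*a*c = (2*a*αs+b)^2 := by linear_combination (-4*a) * hroot
      have hdnn : 0 ≤ b^2-4*a*c := hd ▸ sq_nonneg _
      set s := Real.sqrt (b^2-4*a*c) with hs
      have hs2 : s^2 = b^2-4*a*c := Real.sq_sqrt hdnn
      have hsnn : 0 ≤ s := Real.sqrt_nonneg _
      have hfac : (2*a*αs + b - s)*(2*a*αs + b + s) = 0 := by
        have h := hs2
        linear_combination -hd - h
      rcases lt_trichotomy a 0 with hneg | hzero | hpos
      · have haz : a ≠ 0 := ne_of_lt hneg
        have hac : 0 < a*c := mul_pos_of_neg_of_neg hneg hcneg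
        have hslt : s < b := sqrt_lt_self (by linear_combination hs2) hsnn hbpos hac
        have h2a : (2*a) ≠ 0 := by simpa using haz
        have hrpos : 0 < (-b+s)/(2*a) := div_pos_of_neg_of_neg (by linarith) (by linarith)
        have h1 : αs ≤ (-b+s)/(2*a) := hmin _ hrpos (root_formula haz hs2 rfl)
        rcases mul_eq_zero.1 hfac with h | h
        · rw [eq_div_iff h2a]
          linarith
        · have h2 : (-b+s)/(2*a) ≤ αs := by
            rw [div_le_iff_of_neg (by linarith : 2*a < 0)]
            linarith
          linarith
      · exact absurd hzero hane
      · have h2a : (2*a) ≠ 0 := by positivity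
        rcases mul_eq_zero.1 hfac with h | h
        · rw [eq_div_iff h2a]; linarith
        · exfalso; nlinarith
    · intro α hα
      by_cases h0 : 0 ≤ a
      · have hfac : ∀ t : ℝ, a*t^2+b*t+c = (t - αs)*(a*(t+αs)+b) := by
          intro t; linear_combination hroot
        rcases le_total α αs with hle | hle
        · have hA := hanti 0 αs (by
            intro t ht
            rw [hfac]
            apply mul_nonpos_of_nonpos_of_nonneg (by linarith [ht.2])
            nlinarith [ht.1, h0, hαs])
          exact hA (Set.mem_Icc.2 ⟨le_of_lt hα, hle⟩)
            (Set.mem_Icc.2 ⟨le_of_lt hαs, le_refl _⟩) hle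
        · have hM := hmono αs α (by
            intro t ht
            rw [hfac]
            apply mul_nonneg (by linarith [ht.1])
            nlinarith [ht.1, h0, hαs])
          exact hM (Set.mem_Icc.2 ⟨le_refl _, hle⟩) (Set.mem_Icc.2 ⟨hle, le_refl _⟩) hle
      · push_neg at h0
        have haz : a ≠ 0 := ne_of_lt h0
        set r2 : ℝ := -b/a - αs with hr2
        have hsum : a*r2 = -b - a*αs := by
          rw [hr2]; field_simp
        have hprod : a*(αs*r2) = c := by linear_combination αs*hsum - hroot
        have hr2pos : 0 < r2 := by
          by_contra hcon
          push_neg at hcon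
          have h1 : αs * r2 ≤ 0 := mul_nonpos_of_nonneg_of_nonpos (le_of_lt hαs) hcon
          nlinarith [hprod, mul_nonneg (neg_nonneg.2 (le_of_lt h0)) (neg_nonneg.2 h1)]
        have hfac : ∀ t : ℝ, a*t^2+b*t+c = a*(t-αs)*(t-r2) := by
          intro t; linear_combination t*hsum - hprod
        have hle2 : αs ≤ r2 := by
          apply hmin r2 hr2pos
          rw [hfac]; ring
        have hAnti := hanti 0 αs (by
          intro t ht
          rw [hfac]
          have h1 : t - αs < 0 := by linarith [ht.2]
          have h2 : t - r2 < 0 := by linarith [ht.2]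
          nlinarith [mul_pos_of_neg_of_neg h1 h2])
        have hfs0 : f αs ≤ f 0 :=
          hAnti (Set.mem_Icc.2 ⟨le_refl 0, le_of_lt hαs⟩)
            (Set.mem_Icc.2 ⟨le_of_lt hαs, le_refl _⟩) (le_of_lt hαs)
        rcases le_total α αs with hle | hle
        · exact hAnti (Set.mem_Icc.2 ⟨le_of_lt hα, hle⟩)
            (Set.mem_Icc.2 ⟨le_of_lt hαs, le_refl _⟩) hle
        · rcases le_total α r2 with hle3 | hle3
          · have hM := hmono αs r2 (by
              intro t ht
              rw [hfac]
              have h1 : 0 ≤ t - αs := by linarith [ht.1]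
              have h2 : t - r2 ≤ 0 := by linarith [ht.2]
              nlinarith [mul_nonpos_of_nonneg_of_nonpos h1 h2])
            exact hM (Set.mem_Icc.2 ⟨le_refl _, hle2⟩) (Set.mem_Icc.2 ⟨hle, hle3⟩) hle
          · -- α ≥ r2 : f α ≥ App/Bpp ≥ Axx/Bxx + δ > f 0 ≥ f αs
            have hnum : 0 ≤ -b - 2*a*α := by nlinarith [hsum]
            have hdpos : 0 < (Bxx + 2*Bpx*α + Bpp*α^2)*Bpp := mul_pos (hD α) hBpp
            have hge : 0 ≤ f α - App/Bpp := by
              rw [hfp]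
              exact div_nonneg hnum (le_of_lt hdpos)
            rw [hf0] at hfs0
            linarith


open Matrix

/-- Under descent (`pᵀ(Ax − ρ(x)Bx) < 0`) and the gap condition
`ρ(p) − ρ(x) ≥ δ > 0`, the quadratic `aα² + bα + c` has a positive root; its smallest
positive root `α*` (equal to `−c/b` if `a = 0`, and `(−b + √(b² − 4ac))/(2a)` if `a ≠ 0`)
is the global minimizer of `α ↦ ρ(x + αp)` over `(0, ∞)`. -/
theorem optimal_step_size
    {n : ℕ} (A B : Matrix (Fin n) (Fin n) ℝ)
    (hA : A.IsSymm) (hB : B.PosDef)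
    (x p : Fin n → ℝ) (hxp : LinearIndependent ℝ ![x, p])
    (ρ : (Fin n → ℝ) → ℝ)
    (hρ : ∀ y : Fin n → ℝ, ρ y = (y ⬝ᵥ A.mulVec y) / (y ⬝ᵥ B.mulVec y))
    (hdesc : p ⬝ᵥ (A.mulVec x - ρ x • B.mulVec x) < 0)
    (δ : ℝ) (hδ : 0 < δ) (hgap : δ ≤ ρ p - ρ x)
    (a b c : ℝ)
    (ha : a = (p ⬝ᵥ A.mulVec p) * (p ⬝ᵥ B.mulVec x) - (p ⬝ᵥ B.mulVec p) * (p ⬝ᵥ A.mulVec x))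
    (hb : b = (p ⬝ᵥ A.mulVec p) * (x ⬝ᵥ B.mulVec x) - (p ⬝ᵥ B.mulVec p) * (x ⬝ᵥ A.mulVec x))
    (hc : c = (p ⬝ᵥ A.mulVec x) * (x ⬝ᵥ B.mulVec x) - (p ⬝ᵥ B.mulVec x) * (x ⬝ᵥ A.mulVec x)) :
    (∃ α : ℝ, 0 < α ∧ a * α ^ 2 + b * α + c = 0) ∧
    ∀ αs : ℝ, 0 < αs → a * αs ^ 2 + b * αs + c = 0 →
      (∀ β : ℝ, 0 < β → a * β ^ 2 + b * β + c = 0 → αs ≤ β) →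
      (a = 0 → αs = -c / b) ∧
      (a ≠ 0 → αs = (-b + Real.sqrt (b ^ 2 - 4 * a * c)) / (2 * a)) ∧
      ∀ α : ℝ, 0 < α → ρ (x + αs • p) ≤ ρ (x + α • p) := by
  have hsymm : ∀ (M : Matrix (Fin n) (Fin n) ℝ), M.IsSymm →
      ∀ v w : Fin n → ℝ, v ⬝ᵥ M.mulVec w = w ⬝ᵥ M.mulVec v := by
    intro M hM v w
    rw [Matrix.dotProduct_mulVec, ← Matrix.mulVec_transpose, hM.eq]
    exact dotProduct_comm _ _
  have hBsymm : B.IsSymm := by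
    have := hB.1
    rwa [Matrix.IsHermitian, conjTranspose_eq_transpose_of_trivial] at this
  have hBpos : ∀ v : Fin n → ℝ, v ≠ 0 → 0 < v ⬝ᵥ B.mulVec v := by
    intro v hv
    simpa using hB.dotProduct_mulVec_pos hv
  rw [linearIndependent_fin2] at hxp
  have hp0 : p ≠ 0 := by simpa using hxp.1
  have hxap : ∀ α : ℝ, x + α • p ≠ 0 := by
    intro α h
    apply hxp.2 (-α)
    simp only [Matrix.cons_val_one, Matrix.head_cons, Matrix.cons_val_zero]
    have : x = -(α • p) := by linear_combination (norm := module) h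
    rw [this]; module
  have hx0 : x ≠ 0 := by
    have h := hxap 0
    simpa using h
  have expand : ∀ (M : Matrix (Fin n) (Fin n) ℝ), M.IsSymm → ∀ α : ℝ,
      (x + α • p) ⬝ᵥ M.mulVec (x + α • p)
        = x ⬝ᵥ M.mulVec x + 2*(p ⬝ᵥ M.mulVec x)*α + (p ⬝ᵥ M.mulVec p)*α^2 := by
    intro M hM α
    simp only [Matrix.mulVec_add, Matrix.mulVec_smul, dotProduct_add, add_dotProduct,
      dotProduct_smul, smul_dotProduct, smul_eq_mul]
    rw [hsymm M hM x p]
    ring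
  have hBpp : 0 < p ⬝ᵥ B.mulVec p := hBpos p hp0
  have hBxx : 0 < x ⬝ᵥ B.mulVec x := hBpos x hx0
  have hD : ∀ α : ℝ, 0 < x ⬝ᵥ B.mulVec x + 2*(p ⬝ᵥ B.mulVec x)*α + (p ⬝ᵥ B.mulVec p)*α^2 := by
    intro α
    rw [← expand B hBsymm α]
    exact hBpos _ (hxap α)
  have hrep : ∀ α : ℝ, ρ (x + α • p)
      = (x ⬝ᵥ A.mulVec x + 2*(p ⬝ᵥ A.mulVec x)*α + (p ⬝ᵥ A.mulVec p)*α^2)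
        / (x ⬝ᵥ B.mulVec x + 2*(p ⬝ᵥ B.mulVec x)*α + (p ⬝ᵥ B.mulVec p)*α^2) := by
    intro α
    rw [hρ, expand A hA α, expand B hBsymm α]
  have hρx : ρ x = (x ⬝ᵥ A.mulVec x) / (x ⬝ᵥ B.mulVec x) := hρ x
  have hρp : ρ p = (p ⬝ᵥ A.mulVec p) / (p ⬝ᵥ B.mulVec p) := hρ p
  have hgap' : δ ≤ (p ⬝ᵥ A.mulVec p)/(p ⬝ᵥ B.mulVec p) - (x ⬝ᵥ A.mulVec x)/(x ⬝ᵥ B.mulVec x) := by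
    rw [hρp, hρx] at hgap
    exact hgap
  have hdesc' : p ⬝ᵥ A.mulVec x - (x ⬝ᵥ A.mulVec x)/(x ⬝ᵥ B.mulVec x) * (p ⬝ᵥ B.mulVec x) < 0 := by
    rw [hρx] at hdesc
    simpa [dotProduct_sub, dotProduct_smul, smul_eq_mul] using hdesc
  have keyb : ((p ⬝ᵥ A.mulVec p)/(p ⬝ᵥ B.mulVec p) - (x ⬝ᵥ A.mulVec x)/(x ⬝ᵥ B.mulVec x))
      * ((p ⬝ᵥ B.mulVec p) * (x ⬝ᵥ B.mulVec x))
      = (p ⬝ᵥ A.mulVec p) * (x ⬝ᵥ B.mulVec x) - (p ⬝ᵥ B.mulVec p) * (x ⬝ᵥ A.mulVec x) := by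
    field_simp
  have hbpos : 0 < b := by
    rw [hb, ← keyb]
    exact mul_pos (by linarith) (mul_pos hBpp hBxx)
  have keyc : (p ⬝ᵥ A.mulVec x - (x ⬝ᵥ A.mulVec x)/(x ⬝ᵥ B.mulVec x) * (p ⬝ᵥ B.mulVec x))
      * (x ⬝ᵥ B.mulVec x)
      = (p ⬝ᵥ A.mulVec x) * (x ⬝ᵥ B.mulVec x) - (p ⬝ᵥ B.mulVec x) * (x ⬝ᵥ A.mulVec x) := by
    field_simp
  have hcneg : c < 0 := by
    rw [hc, ← keyc]
    exact mul_neg_of_neg_of_pos hdesc' hBxx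
  obtain ⟨hex, hmain⟩ := rq_key (p ⬝ᵥ A.mulVec p) (p ⬝ᵥ A.mulVec x) (x ⬝ᵥ A.mulVec x)
    (p ⬝ᵥ B.mulVec p) (p ⬝ᵥ B.mulVec x) (x ⬝ᵥ B.mulVec x) a b c δ hD hBpp ha hb hc
    hbpos hcneg hδ hgap'
  refine ⟨hex, ?_⟩
  intro αs h1 h2 h3
  obtain ⟨e1, e2, e3⟩ := hmain αs h1 h2 h3
  refine ⟨e1, e2, ?_⟩
  intro α hα
  rw [hrep αs, hrep α]
  exact e3 α hα
end

section
/- Let A, B be real symmetric n×n matrices with B positive definite, with Rayleigh quotient ρ(u) = (uᵀAu)/(uᵀBu). Suppose x_j, g ∈ ℝⁿ with ‖x_j‖_B = ‖g‖_B = 1, and suppose x_k = β·x_j + γ·g satisfies ‖x_k‖_B = 1, where β, γ ∈ ℝ. Let r_j = Ax_j − ρ(x_j)Bx_j be the eigenresidual of x_j. Then ρ(x_k) = ρ(x_j) + 2γβ·(gᵀr_j) + γ²·(ρ(g) − ρ(x_j)). -/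
open Matrix

lemma symm_dot_mulVec {n : ℕ} {M : Matrix (Fin n) (Fin n) ℝ} (hM : M.IsSymm)
    (x y : Fin n → ℝ) : x ⬝ᵥ M.mulVec y = y ⬝ᵥ M.mulVec x := by
  rw [Matrix.dotProduct_mulVec, ← Matrix.mulVec_transpose, hM.eq, dotProduct_comm]

/-- Rayleigh quotient of a `B`-unit combination `x_k = β x_j + γ g`
of `B`-unit vectors: `ρ(x_k) = ρ(x_j) + 2γβ (gᵀr_j) + γ² (ρ(g) − ρ(x_j))`, where
`r_j = Ax_j − ρ(x_j)Bx_j`. -/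
theorem rayleigh_of_combination
    {n : ℕ} (A B : Matrix (Fin n) (Fin n) ℝ)
    (hA : A.IsSymm) (hB : B.PosDef)
    (ρ : (Fin n → ℝ) → ℝ)
    (hρ : ∀ y : Fin n → ℝ, ρ y = (y ⬝ᵥ A.mulVec y) / (y ⬝ᵥ B.mulVec y))
    (xj g xk : Fin n → ℝ)
    (hxj : xj ⬝ᵥ B.mulVec xj = 1)
    (hg : g ⬝ᵥ B.mulVec g = 1)
    (β γ : ℝ)
    (hxk : xk = β • xj + γ • g)
    (hxknorm : xk ⬝ᵥ B.mulVec xk = 1)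
    (rj : Fin n → ℝ)
    (hrj : rj = A.mulVec xj - ρ xj • B.mulVec xj) :
    ρ xk = ρ xj + 2 * γ * β * (g ⬝ᵥ rj) + γ ^ 2 * (ρ g - ρ xj) := by
  have hBs : B.IsSymm := by simpa using hB.1
  have hρj : ρ xj = xj ⬝ᵥ A.mulVec xj := by rw [hρ, hxj, div_one]
  have hρg : ρ g = g ⬝ᵥ A.mulVec g := by rw [hρ, hg, div_one]
  have expand : ∀ (M : Matrix (Fin n) (Fin n) ℝ), M.IsSymm →
      xk ⬝ᵥ M.mulVec xk = β^2 * (xj ⬝ᵥ M.mulVec xj) + 2*β*γ*(g ⬝ᵥ M.mulVec xj)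
        + γ^2 * (g ⬝ᵥ M.mulVec g) := by
    intro M hM
    rw [hxk]
    simp only [Matrix.mulVec_add, Matrix.mulVec_smul, dotProduct_add, add_dotProduct,
      smul_dotProduct, dotProduct_smul, smul_eq_mul]
    rw [symm_dot_mulVec hM xj g]
    ring
  have hBnorm := expand B hBs
  rw [hxknorm, hxj, hg] at hBnorm
  have hAk := expand A hA
  have hρk : ρ xk = xk ⬝ᵥ A.mulVec xk := by rw [hρ, hxknorm, div_one]
  have hgr : g ⬝ᵥ rj = g ⬝ᵥ A.mulVec xj - ρ xj * (g ⬝ᵥ B.mulVec xj) := by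
    rw [hrj]; simp [dotProduct_sub, dotProduct_smul]
  rw [hρk, hAk, hgr, hρj, hρg]
  linear_combination (-(xj ⬝ᵥ A.mulVec xj)) * hBnorm
end

section
/- Let D be any real n×n matrix, let x ∈ ℝⁿ with xᵀx = 1, and let P = I − xxᵀ be the orthogonal projector onto the complement of span{x}. Then for every integer m ≥ 0, span({x} ∪ {(PD)ʲx : 1 ≤ j ≤ m}) = span{x, Dx, D²x, …, Dᵐx}; that is, the deflated Krylov space generated by PD starting from x, together with x itself, equals the ordinary Krylov subspace K_{m+1}(D, x). -/
open Matrix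

/-- Deflated Krylov space identity: for any matrix `D`, unit vector `x`
and `P = I − xxᵀ`, the span of `x` together with `(PD)ʲx`, `1 ≤ j ≤ m`, equals the
ordinary Krylov subspace `span{x, Dx, …, Dᵐx}`. -/
theorem deflated_krylov_span
    {n : ℕ} (D : Matrix (Fin n) (Fin n) ℝ)
    (x : Fin n → ℝ) (hx : x ⬝ᵥ x = 1)
    (P : Matrix (Fin n) (Fin n) ℝ)
    (hP : P = 1 - vecMulVec x x)
    (m : ℕ) :
    Submodule.span ℝ
        (insert x {y : Fin n → ℝ | ∃ j : ℕ, 1 ≤ j ∧ j ≤ m ∧ y = ((P * D) ^ j).mulVec x})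
      = Submodule.span ℝ {y : Fin n → ℝ | ∃ j : ℕ, j ≤ m ∧ y = (D ^ j).mulVec x} := by
  have hPv : ∀ v : Fin n → ℝ, P *ᵥ v = v - (x ⬝ᵥ v) • x := by
    intro v
    subst hP
    rw [Matrix.sub_mulVec, Matrix.one_mulVec]
    congr 1
    ext i
    simp only [Matrix.mulVec, Matrix.vecMulVec_apply, dotProduct, Pi.smul_apply,
      smul_eq_mul, Finset.sum_mul, Finset.mul_sum]
    exact Finset.sum_congr rfl fun j _ => by ring
  -- graded submodules
  set KR : ℕ → Submodule ℝ (Fin n → ℝ) :=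
    fun j => Submodule.span ℝ {y : Fin n → ℝ | ∃ i : ℕ, i ≤ j ∧ y = (D ^ i).mulVec x} with hKR
  set KL : ℕ → Submodule ℝ (Fin n → ℝ) :=
    fun j => Submodule.span ℝ
      (insert x {y : Fin n → ℝ | ∃ i : ℕ, 1 ≤ i ∧ i ≤ j ∧ y = ((P * D) ^ i).mulVec x}) with hKL
  have hxKR : ∀ j, x ∈ KR j := by
    intro j
    exact Submodule.subset_span ⟨0, Nat.zero_le _, by simp⟩
  have hxKL : ∀ j, x ∈ KL j := fun j => Submodule.subset_span (Set.mem_insert _ _)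
  have hKRmono : ∀ {a b : ℕ}, a ≤ b → KR a ≤ KR b := by
    intro a b hab
    apply Submodule.span_mono
    rintro y ⟨i, hi, rfl⟩
    exact ⟨i, hi.trans hab, rfl⟩
  have hKLmono : ∀ {a b : ℕ}, a ≤ b → KL a ≤ KL b := by
    intro a b hab
    apply Submodule.span_mono
    apply Set.insert_subset_insert
    rintro y ⟨i, h1, hi, rfl⟩
    exact ⟨i, h1, hi.trans hab, rfl⟩
  -- D maps KR j into KR (j+1)
  have hDKR : ∀ j, ∀ v ∈ KR j, D *ᵥ v ∈ KR (j + 1) := by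
    intro j v hv
    have := Submodule.mem_map_of_mem (f := D.mulVecLin) hv
    rw [Submodule.map_span] at this
    refine Submodule.span_le.2 ?_ this
    rintro y ⟨z, ⟨i, hi, rfl⟩, rfl⟩
    refine Submodule.subset_span ⟨i + 1, Nat.succ_le_succ hi, ?_⟩
    simp [Matrix.mulVecLin_apply, pow_succ', Matrix.mulVec_mulVec]
  -- D maps KL j into KL (j+1)
  have hDKL : ∀ j, ∀ v ∈ KL j, D *ᵥ v ∈ KL (j + 1) := by
    intro j v hv
    have := Submodule.mem_map_of_mem (f := D.mulVecLin) hv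
    rw [Submodule.map_span] at this
    refine Submodule.span_le.2 ?_ this
    rintro y ⟨z, hz, rfl⟩
    -- D z = (P*D) z + (x ⬝ D z) • x
    have key : D.mulVecLin z = ((P * D) *ᵥ z) + (x ⬝ᵥ (D *ᵥ z)) • x := by
      rw [Matrix.mulVecLin_apply, ← Matrix.mulVec_mulVec, hPv]
      abel
    rw [key]
    refine add_mem ?_ (Submodule.smul_mem _ _ (hxKL _))
    rcases hz with rfl | ⟨i, h1, hi, rfl⟩
    · exact Submodule.subset_span (Set.mem_insert_of_mem _ ⟨1, le_refl 1, Nat.succ_le_succ (Nat.zero_le _), by simp⟩)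
    · refine Submodule.subset_span (Set.mem_insert_of_mem _ ⟨i + 1, Nat.le_add_left _ _, Nat.succ_le_succ hi, ?_⟩)
      simp [pow_succ', Matrix.mulVec_mulVec]
  -- Lemma A : (PD)^j x ∈ KR j
  have hA : ∀ j, ((P * D) ^ j).mulVec x ∈ KR j := by
    intro j
    induction j with
    | zero => simpa using hxKR 0
    | succ j ih =>
        have h1 : D *ᵥ (((P * D) ^ j) *ᵥ x) ∈ KR (j + 1) := hDKR j _ ih
        have h2 : ((P * D) ^ (j + 1)) *ᵥ x
            = (D *ᵥ (((P * D) ^ j) *ᵥ x)) - (x ⬝ᵥ (D *ᵥ (((P * D) ^ j) *ᵥ x))) • x := by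
          rw [pow_succ', ← Matrix.mulVec_mulVec, ← Matrix.mulVec_mulVec, hPv]
        rw [h2]
        exact sub_mem h1 (Submodule.smul_mem _ _ (hxKR _))
  -- Lemma B : D^j x ∈ KL j
  have hB : ∀ j, (D ^ j).mulVec x ∈ KL j := by
    intro j
    induction j with
    | zero => simpa using hxKL 0
    | succ j ih =>
        have h2 : (D ^ (j + 1)) *ᵥ x = D *ᵥ ((D ^ j) *ᵥ x) := by
          rw [pow_succ', ← Matrix.mulVec_mulVec]
        rw [h2]
        exact hDKL j _ ih
  apply le_antisymm
  · refine Submodule.span_le.2 ?_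
    rintro y (rfl | ⟨i, h1, hi, rfl⟩)
    · exact hxKR m
    · exact hKRmono hi (hA i)
  · refine Submodule.span_le.2 ?_
    rintro y ⟨i, hi, rfl⟩
    exact hKLmono hi (hB i)
end

section
/- Let A, B be real symmetric n×n matrices with B positive definite, and let x, p ∈ ℝⁿ be linearly independent with pᵀ(Ax − ρ(x)Bx) < 0 and ρ(p) > ρ(x). Let a, b, c be given by a = (pᵀAp)(pᵀBx) − (pᵀBp)(pᵀAx), b = (pᵀAp)(xᵀBx) − (pᵀBp)(xᵀAx), c = (pᵀAx)(xᵀBx) − (pᵀBx)(xᵀAx), let α* be the smallest positive root of aα² + bα + c = 0, and let q(α) = (x + αp)ᵀB(x + αp). Set I = ∫₀^{α*}(aα² + bα + c)dα = (a/3)(α*)³ + (b/2)(α*)² + c·α*. Then I < 0 and 2I / (min_{α∈[0,α*]} q(α)²) ≤ ρ(x + α*p) − ρ(x) ≤ 2I / (max_{α∈[0,α*]} q(α)²), where max_{α∈[0,α*]} q(α) = max{‖x‖²_B, ‖x + α*p‖²_B}; in particular ρ(x + α*p) < ρ(x). -/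
open Matrix

private lemma quad_deriv (c0 c1 c2 : ℝ) (t : ℝ) :
    HasDerivAt (fun s : ℝ => c0 + c1 * s + c2 * s ^ 2) (c1 + 2 * c2 * t) t := by
  have h := (((hasDerivAt_id t).const_mul c1).add ((hasDerivAt_pow 2 t).const_mul c2)).const_add c0
  have hfun : (fun s : ℝ => c0 + (c1 * id s + c2 * s ^ 2)) =
      (fun s : ℝ => c0 + c1 * s + c2 * s ^ 2) := by funext s; simp [add_assoc]
  replace h : HasDerivAt (fun s : ℝ => c0 + (c1 * id s + c2 * s ^ 2)) _ t := h
  rw [hfun] at h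
  convert h using 1
  push_cast
  ring

/-- Exact sandwich inequality for the Rayleigh-quotient decrease of
the locally optimal line search: with `α*` the smallest positive root of
`aα² + bα + c`, `q(α) = (x+αp)ᵀB(x+αp)` and
`I = ∫₀^{α*}(aα²+bα+c)dα = (a/3)α*³ + (b/2)α*² + cα*`, one has `I < 0`,
`max_{[0,α*]} q = max{‖x‖²_B, ‖x+α*p‖²_B}`, and
`2I/(min q)² ≤ ρ(x+α*p) − ρ(x) ≤ 2I/(max q)² < 0`. -/
theorem rayleigh_decrease_sandwich
    {n : ℕ} (A B : Matrix (Fin n) (Fin n) ℝ)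
    (hA : A.IsSymm) (hB : B.PosDef)
    (x p : Fin n → ℝ) (hxp : LinearIndependent ℝ ![x, p])
    (ρ : (Fin n → ℝ) → ℝ)
    (hρ : ∀ y : Fin n → ℝ, ρ y = (y ⬝ᵥ A.mulVec y) / (y ⬝ᵥ B.mulVec y))
    (hdesc : p ⬝ᵥ (A.mulVec x - ρ x • B.mulVec x) < 0)
    (hgap : ρ x < ρ p)
    (a b c : ℝ)
    (ha : a = (p ⬝ᵥ A.mulVec p) * (p ⬝ᵥ B.mulVec x) - (p ⬝ᵥ B.mulVec p) * (p ⬝ᵥ A.mulVec x))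
    (hb : b = (p ⬝ᵥ A.mulVec p) * (x ⬝ᵥ B.mulVec x) - (p ⬝ᵥ B.mulVec p) * (x ⬝ᵥ A.mulVec x))
    (hc : c = (p ⬝ᵥ A.mulVec x) * (x ⬝ᵥ B.mulVec x) - (p ⬝ᵥ B.mulVec x) * (x ⬝ᵥ A.mulVec x))
    (αs : ℝ) (hαs : 0 < αs)
    (hroot : a * αs ^ 2 + b * αs + c = 0)
    (hsmallest : ∀ β : ℝ, 0 < β → a * β ^ 2 + b * β + c = 0 → αs ≤ β)
    (q : ℝ → ℝ)
    (hq : ∀ α : ℝ, q α = (x + α • p) ⬝ᵥ B.mulVec (x + α • p))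
    (I : ℝ)
    (hI : I = a / 3 * αs ^ 3 + b / 2 * αs ^ 2 + c * αs) :
    I < 0 ∧
    sSup (q '' Set.Icc 0 αs)
      = max (x ⬝ᵥ B.mulVec x) ((x + αs • p) ⬝ᵥ B.mulVec (x + αs • p)) ∧
    2 * I / (sInf (q '' Set.Icc 0 αs)) ^ 2 ≤ ρ (x + αs • p) - ρ x ∧
    ρ (x + αs • p) - ρ x ≤ 2 * I / (sSup (q '' Set.Icc 0 αs)) ^ 2 ∧
    ρ (x + αs • p) < ρ x := by
  -- symmetric dot product
  have hBsymm : Bᵀ = B := by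
    have := hB.1
    simpa [Matrix.IsHermitian, Matrix.conjTranspose_eq_transpose_of_trivial] using this
  have symmdot : ∀ (M : Matrix (Fin n) (Fin n) ℝ), Mᵀ = M →
      ∀ u v : Fin n → ℝ, u ⬝ᵥ M.mulVec v = v ⬝ᵥ M.mulVec u := by
    intro M hM u v
    rw [Matrix.dotProduct_mulVec]
    nth_rewrite 1 [← hM]
    rw [Matrix.vecMul_transpose, dotProduct_comm]
  have hposB : ∀ u : Fin n → ℝ, u ≠ 0 → 0 < u ⬝ᵥ B.mulVec u := by
    intro u hu
    simpa using hB.dotProduct_mulVec_pos hu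
  -- nonvanishing combinations
  have hpair := LinearIndependent.pair_iff.mp hxp
  have hne : ∀ t : ℝ, x + t • p ≠ 0 := by
    intro t h
    have := (hpair 1 t (by simpa using h)).1
    exact one_ne_zero this
  have hpne : p ≠ 0 := by
    intro h
    have := (hpair 0 1 (by simp [h])).2
    exact one_ne_zero this
  set XAX := x ⬝ᵥ A.mulVec x with hXAX
  set PAX := p ⬝ᵥ A.mulVec x with hPAX
  set PAP := p ⬝ᵥ A.mulVec p with hPAP
  set XBX := x ⬝ᵥ B.mulVec x with hXBX
  set PBX := p ⬝ᵥ B.mulVec x with hPBX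
  set PBP := p ⬝ᵥ B.mulVec p with hPBP
  have hsymA : x ⬝ᵥ A.mulVec p = PAX := symmdot A hA x p
  have hsymB : x ⬝ᵥ B.mulVec p = PBX := symmdot B hBsymm x p
  -- expansions
  have hexp : ∀ (M : Matrix (Fin n) (Fin n) ℝ), (x ⬝ᵥ M.mulVec p = p ⬝ᵥ M.mulVec x) →
      ∀ t : ℝ, (x + t • p) ⬝ᵥ M.mulVec (x + t • p)
        = x ⬝ᵥ M.mulVec x + (2 * (p ⬝ᵥ M.mulVec x)) * t + (p ⬝ᵥ M.mulVec p) * t ^ 2 := by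
    intro M hM t
    simp only [Matrix.mulVec_add, Matrix.mulVec_smul, dotProduct_add,
      add_dotProduct, smul_dotProduct, dotProduct_smul, smul_eq_mul]
    rw [hM]
    ring
  have hq' : ∀ t : ℝ, q t = XBX + (2 * PBX) * t + PBP * t ^ 2 := by
    intro t; rw [hq t, hexp B hsymB]
  have hN : ∀ t : ℝ, (x + t • p) ⬝ᵥ A.mulVec (x + t • p)
      = XAX + (2 * PAX) * t + PAP * t ^ 2 := fun t => hexp A hsymA t
  have hqpos : ∀ t : ℝ, 0 < q t := fun t => by rw [hq t]; exact hposB _ (hne t)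
  have hXBXpos : 0 < XBX := hposB x (by
    intro h
    have := (hpair 1 0 (by simp [h])).1
    exact one_ne_zero this)
  have hPBPpos : 0 < PBP := hposB p hpne
  have hqden : ∀ t : ℝ, XBX + (2 * PBX) * t + PBP * t ^ 2 ≠ 0 := by
    intro t; rw [← hq' t]; exact (hqpos t).ne'
  -- c < 0
  have hρx : ρ x = XAX / XBX := hρ x
  have hcneg : c < 0 := by
    have hd : PAX - ρ x * PBX < 0 := by
      have : p ⬝ᵥ (A.mulVec x - ρ x • B.mulVec x) = PAX - ρ x * PBX := by
        simp [dotProduct_sub, dotProduct_smul, smul_eq_mul]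
        rfl
      linarith [this ▸ hdesc]
    rw [hρx] at hd
    have h2 : XBX * (PAX - XAX / XBX * PBX) = PAX * XBX - PBX * XAX := by
      field_simp
    have h3 : XBX * (PAX - XAX / XBX * PBX) < 0 := mul_neg_of_pos_of_neg hXBXpos hd
    rw [hc]
    linarith [h2 ▸ h3]
  -- g and its sign
  set g : ℝ → ℝ := fun t => a * t ^ 2 + b * t + c with hg
  have hgcont : Continuous g := by fun_prop
  have hgneg : ∀ t ∈ Set.Ioo (0:ℝ) αs, g t < 0 := by
    intro t ht
    by_contra h
    push_neg at h
    have h0 : (0:ℝ) ∈ Set.Icc (g 0) (g t) := ⟨by simp [hg]; linarith, h⟩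
    obtain ⟨s, hs, hgs⟩ := intermediate_value_Icc ht.1.le hgcont.continuousOn h0
    have hs0 : 0 < s := by
      rcases lt_or_eq_of_le hs.1 with h' | h'
      · exact h'
      · exfalso; rw [← h'] at hgs; simp [hg] at hgs; linarith
    have := hsmallest s hs0 (by simpa [hg] using hgs)
    linarith [hs.2, ht.2]
  have hgle : ∀ t ∈ Set.Icc (0:ℝ) αs, g t ≤ 0 := by
    intro t ht
    rcases eq_or_lt_of_le ht.1 with h' | h'
    · simp [hg, ← h']; linarith
    rcases eq_or_lt_of_le ht.2 with h' | h''
    · simp [hg, h']; linarith [hroot]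
    · exact (hgneg t ⟨h', h''⟩).le
  -- integral of g is I
  have hGder : ∀ t : ℝ, HasDerivAt (fun s : ℝ => a / 3 * s ^ 3 + b / 2 * s ^ 2 + c * s) (g t) t := by
    intro t
    have h1 := ((hasDerivAt_pow 3 t).const_mul (a/3)).add
      (((hasDerivAt_pow 2 t).const_mul (b/2)).add ((hasDerivAt_id t).const_mul c))
    have hfun : (fun s : ℝ => a/3 * s ^ 3 + (b/2 * s ^ 2 + c * id s)) =
        (fun s : ℝ => a / 3 * s ^ 3 + b / 2 * s ^ 2 + c * s) := by
      funext s; simp [add_assoc]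
    replace h1 : HasDerivAt (fun s : ℝ => a/3 * s ^ 3 + (b/2 * s ^ 2 + c * id s)) _ t := h1
    rw [hfun] at h1
    convert h1 using 1
    simp [hg]
    push_cast
    ring
  have hgint : IntervalIntegrable g MeasureTheory.volume 0 αs := hgcont.intervalIntegrable 0 αs
  have hIeq : ∫ t in (0:ℝ)..αs, g t = I := by
    rw [intervalIntegral.integral_eq_sub_of_hasDerivAt (fun t _ => hGder t) hgint, hI]
    ring
  have hIneg : I < 0 := by
    have hpos : 0 < ∫ t in (0:ℝ)..αs, (-g) t :=
      intervalIntegral.intervalIntegral_pos_of_pos_on hgint.neg (fun t ht => by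
        simpa using (hgneg t ht)) hαs
    have : ∫ t in (0:ℝ)..αs, (-g) t = -I := by
      rw [show (-g) = fun t => -(g t) from rfl, intervalIntegral.integral_neg, hIeq]
    linarith [this ▸ hpos]
  -- the Rayleigh quotient along the line
  set F : ℝ → ℝ := fun t => (XAX + (2 * PAX) * t + PAP * t ^ 2) /
      (XBX + (2 * PBX) * t + PBP * t ^ 2) with hF
  have hρt : ∀ t : ℝ, ρ (x + t • p) = F t := by
    intro t
    rw [hρ, hN t, hexp B hsymB t]
  have hρ0 : ρ x = F 0 := by rw [hρx, hF]; simp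
  have hFder : ∀ t : ℝ, HasDerivAt F
      (2 * g t / (XBX + (2 * PBX) * t + PBP * t ^ 2) ^ 2) t := by
    intro t
    have hNd := quad_deriv XAX (2 * PAX) PAP t
    have hDd := quad_deriv XBX (2 * PBX) PBP t
    have h := hNd.div hDd (hqden t)
    refine h.congr_deriv ?_
    rw [div_eq_div_iff (pow_ne_zero 2 (hqden t)) (pow_ne_zero 2 (hqden t))]
    simp only [hg]
    rw [ha, hb, hc]
    ring
  have hFintegrand : Continuous (fun t : ℝ => 2 * g t / (XBX + (2 * PBX) * t + PBP * t ^ 2) ^ 2) := by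
    apply Continuous.div (by fun_prop) (by fun_prop)
    intro t
    exact pow_ne_zero 2 (hqden t)
  have hkey : F αs - F 0 = ∫ t in (0:ℝ)..αs,
      2 * g t / (XBX + (2 * PBX) * t + PBP * t ^ 2) ^ 2 :=
    (intervalIntegral.integral_eq_sub_of_hasDerivAt (fun t _ => hFder t)
      (hFintegrand.intervalIntegrable 0 αs)).symm
  -- sup / inf of q on [0, αs]
  have hqcont : Continuous q := by
    have : Continuous (fun t : ℝ => XBX + (2 * PBX) * t + PBP * t ^ 2) := by fun_prop
    exact this.congr (fun t => (hq' t).symm)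
  set K := q '' Set.Icc 0 αs with hK
  have hKne : K.Nonempty := ⟨q 0, ⟨0, ⟨le_refl 0, hαs.le⟩, rfl⟩⟩
  have hKcpt : IsCompact K := isCompact_Icc.image hqcont
  set M := sSup K with hM
  set m := sInf K with hm
  have hMmem : M ∈ K := hKcpt.sSup_mem hKne
  have hmmem : m ∈ K := hKcpt.sInf_mem hKne
  have hub : ∀ t ∈ Set.Icc (0:ℝ) αs, q t ≤ M := fun t ht =>
    le_csSup hKcpt.bddAbove ⟨t, ht, rfl⟩
  have hlb : ∀ t ∈ Set.Icc (0:ℝ) αs, m ≤ q t := fun t ht =>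
    csInf_le hKcpt.bddBelow ⟨t, ht, rfl⟩
  have hmpos : 0 < m := by
    obtain ⟨t, _, ht⟩ := hmmem
    rw [← ht]; exact hqpos t
  have hMpos : 0 < M := lt_of_lt_of_le hmpos (le_trans (hlb 0 ⟨le_refl 0, hαs.le⟩)
    (hub 0 ⟨le_refl 0, hαs.le⟩))
  -- sSup = max of endpoints
  have hSupEq : M = max (q 0) (q αs) := by
    apply IsGreatest.csSup_eq
    constructor
    · rcases max_choice (q 0) (q αs) with h | h
      · rw [h]; exact ⟨0, ⟨le_refl 0, hαs.le⟩, rfl⟩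
      · rw [h]; exact ⟨αs, ⟨hαs.le, le_refl αs⟩, rfl⟩
    · rintro y ⟨t, ht, rfl⟩
      have hkey2 : αs * q t ≤ (αs - t) * q 0 + t * q αs := by
        rw [hq' t, hq' 0, hq' αs]
        nlinarith [mul_nonneg (mul_nonneg (mul_nonneg hPBPpos.le ht.1)
          (sub_nonneg.2 ht.2)) hαs.le]
      have h1 : (αs - t) * q 0 ≤ (αs - t) * max (q 0) (q αs) :=
        mul_le_mul_of_nonneg_left (le_max_left _ _) (by linarith [ht.2])
      have h2 : t * q αs ≤ t * max (q 0) (q αs) :=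
        mul_le_mul_of_nonneg_left (le_max_right _ _) ht.1
      have : αs * q t ≤ αs * max (q 0) (q αs) := by linarith
      exact le_of_mul_le_mul_left this hαs
  -- pointwise bounds for the integrand
  have hup : ∀ t ∈ Set.Icc (0:ℝ) αs,
      2 * g t / (XBX + (2 * PBX) * t + PBP * t ^ 2) ^ 2 ≤ 2 * g t / M ^ 2 := by
    intro t ht
    rw [← hq' t, div_le_div_iff₀ (pow_pos (hqpos t) 2) (pow_pos hMpos 2)]
    have h2 : 0 ≤ (M - q t) * (M + q t) :=
      mul_nonneg (by linarith [hub t ht]) (by linarith [hqpos t, hub t ht])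
    have h3 : 2 * g t * ((M - q t) * (M + q t)) ≤ 0 :=
      mul_nonpos_of_nonpos_of_nonneg (by linarith [hgle t ht]) h2
    have h4 : 2 * g t * M ^ 2 - 2 * g t * q t ^ 2 = 2 * g t * ((M - q t) * (M + q t)) := by ring
    linarith [h3, h4]
  have hlo : ∀ t ∈ Set.Icc (0:ℝ) αs,
      2 * g t / m ^ 2 ≤ 2 * g t / (XBX + (2 * PBX) * t + PBP * t ^ 2) ^ 2 := by
    intro t ht
    rw [← hq' t, div_le_div_iff₀ (pow_pos hmpos 2) (pow_pos (hqpos t) 2)]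
    have h2 : 0 ≤ (q t - m) * (q t + m) :=
      mul_nonneg (by linarith [hlb t ht]) (by linarith [hqpos t, hmpos])
    have h3 : 2 * g t * ((q t - m) * (q t + m)) ≤ 0 :=
      mul_nonpos_of_nonpos_of_nonneg (by linarith [hgle t ht]) h2
    have h4 : 2 * g t * q t ^ 2 - 2 * g t * m ^ 2 = 2 * g t * ((q t - m) * (q t + m)) := by ring
    linarith [h3, h4]
  -- integral bounds
  have hintM : ∫ t in (0:ℝ)..αs, 2 * g t / M ^ 2 = 2 * I / M ^ 2 := by
    have : (fun t : ℝ => 2 * g t / M ^ 2) = (fun t : ℝ => (2 / M ^ 2) * g t) := by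
      funext t; ring
    rw [this, intervalIntegral.integral_const_mul, hIeq]
    ring
  have hintm : ∫ t in (0:ℝ)..αs, 2 * g t / m ^ 2 = 2 * I / m ^ 2 := by
    have : (fun t : ℝ => 2 * g t / m ^ 2) = (fun t : ℝ => (2 / m ^ 2) * g t) := by
      funext t; ring
    rw [this, intervalIntegral.integral_const_mul, hIeq]
    ring
  have hupperI : F αs - F 0 ≤ 2 * I / M ^ 2 := by
    rw [hkey, ← hintM]
    apply intervalIntegral.integral_mono_on hαs.le
      (hFintegrand.intervalIntegrable 0 αs)
      ((by fun_prop : Continuous (fun t : ℝ => 2 * g t / M ^ 2)).intervalIntegrable 0 αs)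
      hup
  have hlowerI : 2 * I / m ^ 2 ≤ F αs - F 0 := by
    rw [hkey, ← hintm]
    apply intervalIntegral.integral_mono_on hαs.le
      ((by fun_prop : Continuous (fun t : ℝ => 2 * g t / m ^ 2)).intervalIntegrable 0 αs)
      (hFintegrand.intervalIntegrable 0 αs)
      hlo
  have hΔ : ρ (x + αs • p) - ρ x = F αs - F 0 := by rw [hρt αs, hρ0]
  have hfinal : 2 * I / M ^ 2 < 0 :=
    div_neg_of_neg_of_pos (by linarith) (pow_pos hMpos 2)
  refine ⟨hIneg, ?_, ?_, ?_, ?_⟩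
  · rw [hSupEq, hq 0, hq αs]
    simp [← hXBX]
  · rw [hΔ]; exact hlowerI
  · rw [hΔ]; exact hupperI
  · linarith [hΔ, hupperI, hfinal]
end
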